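/- Let ℓ ≥ 1, let U := [I_ℓ; I_ℓ] ∈ ℝ^{2ℓ×ℓ}, let M ∈ ℝ^{ℓ×ℓ} be the diagonal matrix whose first ℓ−1 diagonal entries are 4 and whose last diagonal entry is 3, and let D ∈ ℝ^{ℓ×ℓ} be the diagonal matrix whose first ℓ−1 diagonal entries are 1 and whose last diagonal entry is 1/2. Then the set {Y : Y real symmetric positive semidefinite 2ℓ×2ℓ matrix with UᵀYU = M, Y_{1:ℓ,1:ℓ} = I_ℓ, Y_{ℓ+1:2ℓ,ℓ+1:2ℓ} = I_ℓ} consists of exactly one element, namely the 2×2 block matrix [[I_ℓ, D],[D, I_ℓ]], and this matrix has rank ℓ+1. -/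

import Mathlib

open Matrix

noncomputable section

/-- Feasibility predicate: `Y` is a symmetric PSD `2ℓ×2ℓ` real matrix with `UᵀYU = M` and both
`ℓ×ℓ` diagonal blocks equal to the identity. -/
def phiFeas (l : ℕ) (U : Matrix (Fin (2*l)) (Fin l) ℝ)
    (M : Matrix (Fin l) (Fin l) ℝ)
    (Y : Matrix (Fin (2*l)) (Fin (2*l)) ℝ) : Prop :=
  Y.PosSemidef ∧ Uᵀ * Y * U = M ∧
  (∀ i j : Fin l, Y ⟨(i : ℕ), by omega⟩ ⟨(j : ℕ), by omega⟩ = if i = j then (1:ℝ) else 0) ∧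
  (∀ i j : Fin l, Y ⟨l + (i : ℕ), by omega⟩ ⟨l + (j : ℕ), by omega⟩ = if i = j then (1:ℝ) else 0)

/-- The `2ℓ×ℓ` block matrix `U = [I_ℓ; I_ℓ]`. -/
def UmatII (l : ℕ) : Matrix (Fin (2*l)) (Fin l) ℝ :=
  Matrix.of fun i j => if (i : ℕ) = (j : ℕ) ∨ (i : ℕ) = l + (j : ℕ) then 1 else 0

/-- The diagonal matrix `M = diag(4, …, 4, 3)`. -/
def Mdiag (l : ℕ) : Matrix (Fin l) (Fin l) ℝ :=
  Matrix.of fun i j => if i = j then (if (i : ℕ) = l - 1 then 3 else 4) else 0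

/-- The diagonal matrix `D = diag(1, …, 1, 1/2)`. -/
def Ddiag (l : ℕ) : Matrix (Fin l) (Fin l) ℝ :=
  Matrix.of fun i j => if i = j then (if (i : ℕ) = l - 1 then 1/2 else 1) else 0

/-- The `2ℓ×2ℓ` block matrix `[[I_ℓ, D], [D, I_ℓ]]`. -/
def blockIDDI (l : ℕ) (D : Matrix (Fin l) (Fin l) ℝ) :
    Matrix (Fin (2*l)) (Fin (2*l)) ℝ :=
  Matrix.of fun i j =>
    if h1 : (i : ℕ) < l then
      if h2 : (j : ℕ) < l then (if i = j then 1 else 0)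
      else D ⟨(i : ℕ), h1⟩ ⟨(j : ℕ) - l, by omega⟩
    else
      if h2 : (j : ℕ) < l then D ⟨(i : ℕ) - l, by omega⟩ ⟨(j : ℕ), h2⟩
      else (if (i : ℕ) = (j : ℕ) then 1 else 0)

/-!
Reindex `Fin (2ℓ)` as `Fin ℓ ⊕ Fin ℓ`. A feasible `Y` is then a positive semidefinite block
matrix `[[I, B], [Bᵀ, I]]`, and `UᵀYU = 2I + B + Bᵀ`, so `B + Bᵀ = 2D`. Wherever `D_aa = 1`, the
vector `e_a - e_{ℓ+a}` is isotropic for `Y`, hence lies in its kernel, so columns `a` and `ℓ+a` of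
`Y` agree. This holds for all indices but one, which forces every off-diagonal entry of `B` to
vanish, i.e. `B = D`. Conversely `[[I, D], [D, I]] = L diag(I, I - D²) Lᵀ` with the unimodular
`L = [[I, 0], [D, I]]`; this shows positive semidefiniteness and gives the rank
`ℓ + #{i | D_ii² ≠ 1} = ℓ + 1`.
-/

namespace Matrix

variable {m : Type*} [Fintype m]

open scoped ComplexOrder in
theorem PosSemidef.col_eq_col_of_diag_add_diag_eq {𝕜 : Type*} [RCLike 𝕜] {A : Matrix m m 𝕜}
    (hA : A.PosSemidef) {i j : m} (h : A i i + A j j = A i j + A j i) (s : m) :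
    A s i = A s j := by
  classical
  set x : m → 𝕜 := Pi.single i 1 - Pi.single j 1
  have hx : A *ᵥ x = 0 := by
    refine (hA.dotProduct_mulVec_zero_iff x).mp ?_
    simp only [x, star_sub, Pi.star_single, star_one, mulVec_sub, mulVec_single,
      MulOpposite.op_one, one_smul, dotProduct_sub, sub_dotProduct, single_dotProduct, col_apply,
      one_mul]
    linear_combination h
  simpa [x, mulVec_sub, sub_eq_zero] using congrFun hx s

variable [DecidableEq m]

theorem transpose_fromRows_one_one_mul_mul {R : Type*} [Semiring R]
    (Y : Matrix (m ⊕ m) (m ⊕ m) R) :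
    (fromRows (1 : Matrix m m R) (1 : Matrix m m R))ᵀ * Y *
        fromRows (1 : Matrix m m R) (1 : Matrix m m R) =
      Y.toBlocks₁₁ + Y.toBlocks₁₂ + Y.toBlocks₂₁ + Y.toBlocks₂₂ := by
  conv_lhs => rw [← fromBlocks_toBlocks Y]
  rw [Matrix.mul_assoc, fromBlocks_mul_fromRows, transpose_fromRows, transpose_one,
    fromCols_mul_fromRows]
  simp only [Matrix.mul_one, Matrix.one_mul]
  abel

theorem fromBlocks_one_diagonal_eq {R : Type*} [CommRing R] (d : m → R) :
    fromBlocks 1 (diagonal d) (diagonal d) 1 =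
      fromBlocks 1 0 (diagonal d) 1 * diagonal (Sum.elim 1 (1 - d * d)) *
        (fromBlocks 1 0 (diagonal d) 1)ᵀ := by
  rw [← fromBlocks_diagonal, fromBlocks_transpose]
  simp [fromBlocks_multiply, diagonal_one]

theorem posSemidef_fromBlocks_one_diagonal {d : m → ℝ} (hd : ∀ i, d i * d i ≤ 1) :
    (fromBlocks 1 (diagonal d) (diagonal d) 1).PosSemidef := by
  have hΛ : (diagonal (Sum.elim (1 : m → ℝ) (1 - d * d))).PosSemidef := by
    refine posSemidef_diagonal_iff.mpr ?_
    rintro (i | i)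
    · simp
    · simpa using hd i
  rw [fromBlocks_one_diagonal_eq]
  simpa [conjTranspose_eq_transpose_of_trivial] using hΛ.mul_mul_conjTranspose_same
    (fromBlocks 1 0 (diagonal d) 1)

theorem rank_fromBlocks_one_diagonal {K : Type*} [Field K] [DecidableEq K] (d : m → K) :
    (fromBlocks 1 (diagonal d) (diagonal d) 1).rank =
      Fintype.card m + Fintype.card {i // d i * d i ≠ 1} := by
  have hL : IsUnit (fromBlocks 1 0 (diagonal d) 1 : Matrix (m ⊕ m) (m ⊕ m) K).det := by
    simp
  rw [fromBlocks_one_diagonal_eq, rank_mul_eq_left_of_isUnit_det _ _ (by rwa [det_transpose]),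
    rank_mul_eq_right_of_isUnit_det _ _ hL, rank_diagonal, Fintype.card_congr Equiv.subtypeSum,
    Fintype.card_sum]
  simp [sub_eq_zero, eq_comm (b := (1 : K))]

theorem PosSemidef.eq_fromBlocks_one_diagonal {Y : Matrix (m ⊕ m) (m ⊕ m) ℝ}
    (hY : Y.PosSemidef) {d : m → ℝ} (h₁₁ : Y.toBlocks₁₁ = 1) (h₂₂ : Y.toBlocks₂₂ = 1)
    (hoff : Y.toBlocks₁₂ + Y.toBlocks₂₁ = diagonal d + diagonal d)
    (hd : ∀ a b, a ≠ b → d a = 1 ∨ d b = 1) :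
    Y = fromBlocks 1 (diagonal d) (diagonal d) 1 := by
  have hsymm (s t) : Y s t = Y t s := by simpa using hY.1.apply t s
  have e₁₁ (a b) : Y (.inl a) (.inl b) = (1 : Matrix m m ℝ) a b := congr_fun₂ h₁₁ a b
  have e₂₂ (a b) : Y (.inr a) (.inr b) = (1 : Matrix m m ℝ) a b := congr_fun₂ h₂₂ a b
  have hdiag (a) : Y (.inl a) (.inr a) = d a := by
    have := congr_fun₂ hoff a a
    simp only [add_apply, toBlocks₁₂, toBlocks₂₁, of_apply, diagonal_apply_eq] at this
    linarith [hsymm (.inr a) (.inl a)]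
  -- where `d a = 1`, the principal minor of `Y` on `inl a, inr a` is `[[1, 1], [1, 1]]`
  have hcol (a) (ha : d a = 1) (s) : Y s (.inl a) = Y s (.inr a) :=
    hY.col_eq_col_of_diag_add_diag_eq (by simp [e₁₁, e₂₂, hdiag, ← hsymm (.inl a), ha]) s
  have h₁₂ : Y.toBlocks₁₂ = diagonal d := by
    ext a b
    rcases eq_or_ne a b with rfl | hab
    · simp [toBlocks₁₂, hdiag]
    · rw [diagonal_apply_ne _ hab]
      rcases hd a b hab with ha | hb
      · calc Y (.inl a) (.inr b) = Y (.inr b) (.inr a) := by rw [hsymm, hcol a ha]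
          _ = 0 := by simp [e₂₂, hab.symm]
      · calc Y (.inl a) (.inr b) = Y (.inl a) (.inl b) := (hcol b hb _).symm
          _ = 0 := by simp [e₁₁, hab]
  rw [h₁₂] at hoff
  rw [← fromBlocks_toBlocks Y, h₁₁, h₁₂, add_left_cancel hoff, h₂₂]

end Matrix

def finSumFinEquivTwoMul (l : ℕ) : Fin l ⊕ Fin l ≃ Fin (2 * l) :=
  finSumFinEquiv.trans (finCongr (two_mul l).symm)

theorem phiFeas_iff_submatrix (l : ℕ) (U : Matrix (Fin (2 * l)) (Fin l) ℝ)
    (M : Matrix (Fin l) (Fin l) ℝ) (Y : Matrix (Fin (2 * l)) (Fin (2 * l)) ℝ) :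
    phiFeas l U M Y ↔
      (Y.submatrix (finSumFinEquivTwoMul l) (finSumFinEquivTwoMul l)).PosSemidef ∧
      (U.submatrix (finSumFinEquivTwoMul l) id)ᵀ *
          Y.submatrix (finSumFinEquivTwoMul l) (finSumFinEquivTwoMul l) *
          U.submatrix (finSumFinEquivTwoMul l) id = M ∧
      (Y.submatrix (finSumFinEquivTwoMul l) (finSumFinEquivTwoMul l)).toBlocks₁₁ = 1 ∧
      (Y.submatrix (finSumFinEquivTwoMul l) (finSumFinEquivTwoMul l)).toBlocks₂₂ = 1 := by
  rw [phiFeas, posSemidef_submatrix_equiv, transpose_submatrix, submatrix_mul_equiv,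
    submatrix_mul_equiv, submatrix_id_id]
  exact and_congr_right' <| and_congr_right' <| and_congr Matrix.ext_iff Matrix.ext_iff

theorem UmatII_submatrix (l : ℕ) :
    (UmatII l).submatrix (finSumFinEquivTwoMul l) id = fromRows 1 1 := by
  ext (i | i) j <;> simp [UmatII, finSumFinEquivTwoMul, one_apply, Fin.ext_iff] <;>
    exact if_congr (by omega) rfl rfl

theorem blockIDDI_submatrix (l : ℕ) (D : Matrix (Fin l) (Fin l) ℝ) :
    (blockIDDI l D).submatrix (finSumFinEquivTwoMul l) (finSumFinEquivTwoMul l) =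
      fromBlocks 1 D D 1 := by
  ext (i | i) (j | j) <;> simp [blockIDDI, finSumFinEquivTwoMul, one_apply, Fin.ext_iff]

def ddiagEntry (l : ℕ) (i : Fin l) : ℝ := if (i : ℕ) = l - 1 then 1 / 2 else 1

theorem Ddiag_eq_diagonal (l : ℕ) : Ddiag l = diagonal (ddiagEntry l) := by
  ext i j
  simp [Ddiag, ddiagEntry, diagonal_apply]

theorem Mdiag_eq (l : ℕ) : Mdiag l = 1 + Ddiag l + Ddiag l + 1 := by
  ext i j
  by_cases h : i = j
  · subst h
    simp only [Mdiag, Ddiag, of_apply, Matrix.add_apply, one_apply_eq, if_true]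
    split_ifs <;> norm_num
  · simp [Mdiag, Ddiag, h]

theorem ddiagEntry_eq_one_or {l : ℕ} {a b : Fin l} (hab : a ≠ b) :
    ddiagEntry l a = 1 ∨ ddiagEntry l b = 1 := by
  have : (a : ℕ) ≠ l - 1 ∨ (b : ℕ) ≠ l - 1 := by
    by_contra! h
    exact hab (Fin.ext (h.1.trans h.2.symm))
  rcases this with h | h <;> simp [ddiagEntry, h]

theorem ddiagEntry_mul_self_le_one (l : ℕ) (i : Fin l) : ddiagEntry l i * ddiagEntry l i ≤ 1 := by
  unfold ddiagEntry
  split_ifs <;> norm_num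

theorem card_ddiagEntry_mul_self_ne_one {l : ℕ} (hl : 1 ≤ l) :
    Fintype.card {i // ddiagEntry l i * ddiagEntry l i ≠ 1} = 1 := by
  rw [Fintype.card_eq_one_iff]
  refine ⟨⟨⟨l - 1, by omega⟩, by norm_num [ddiagEntry]⟩, fun ⟨i, hi⟩ => ?_⟩
  have : (i : ℕ) = l - 1 := by
    by_contra h
    simp [ddiagEntry, h] at hi
  exact Subtype.ext (Fin.ext this)

/-- With `U = [I_ℓ; I_ℓ]` and `M = diag(4,…,4,3)`, the feasible set consists of exactly one
element, namely `[[I_ℓ, D], [D, I_ℓ]]` with `D = diag(1,…,1,1/2)`, and this matrix has rank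
`ℓ+1`. -/
theorem phiFeas_unique_element (l : ℕ) (hl : 1 ≤ l) :
    (∀ Y : Matrix (Fin (2*l)) (Fin (2*l)) ℝ,
        phiFeas l (UmatII l) (Mdiag l) Y ↔ Y = blockIDDI l (Ddiag l)) ∧
    (blockIDDI l (Ddiag l)).rank = l + 1 := by
  refine ⟨fun Y => ?_, ?_⟩
  · rw [phiFeas_iff_submatrix, UmatII_submatrix, transpose_fromRows_one_one_mul_mul, Mdiag_eq,
      ← (reindex (finSumFinEquivTwoMul l).symm (finSumFinEquivTwoMul l).symm).injective.eq_iff]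
    simp only [reindex_apply, Equiv.symm_symm, blockIDDI_submatrix, Ddiag_eq_diagonal]
    constructor
    · rintro ⟨hY, hsum, h₁₁, h₂₂⟩
      refine hY.eq_fromBlocks_one_diagonal h₁₁ h₂₂ ?_ fun a b => ddiagEntry_eq_one_or
      rw [h₁₁, h₂₂] at hsum
      exact add_left_cancel (by simpa only [add_assoc] using add_right_cancel hsum)
    · intro h
      rw [h]
      exact ⟨posSemidef_fromBlocks_one_diagonal (ddiagEntry_mul_self_le_one l), by simp, rfl, rfl⟩
  · rw [← rank_submatrix _ (finSumFinEquivTwoMul l) (finSumFinEquivTwoMul l), blockIDDI_submatrix,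
      Ddiag_eq_diagonal, rank_fromBlocks_one_diagonal, Fintype.card_fin, card_ddiagEntry_mul_self_ne_one hl]
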